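/- Disjunction property characterization: let X ⊆ {D,T,4}. The logic LIK X has the disjunction property (for all formulas A, B, if A∨B is LIK X-derivable then A is LIK X-derivable or B is LIK X-derivable) if and only if D ∈ X or T ∈ X. -/
import Mathlib


/-- Formulas of intuitionistic modal logic. -/
inductive Formula : Type where
  | atom : ℕ → Formula
  | top  : Formula
  | bot  : Formula
  | and  : Formula → Formula → Formula
  | or   : Formula → Formula → Formula
  | imp  : Formula → Formula → Formula
  | box  : Formula → Formula
  | dia  : Formula → Formula
deriving DecidableEq


/-- The three optional extension axioms D, T, 4. -/
inductive ModAx : Type where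
  | D : ModAx
  | T : ModAx
  | Four : ModAx
deriving DecidableEq

/-- The Hilbert system LIK X: a complete Hilbert base for intuitionistic
propositional logic (as axiom schemata, hence all substitution instances of
IPL theorems are derivable), the modal axioms K□, K◇, N, DP, RV, the
extension axioms D, T, 4 according to membership in `X`, with rules
modus ponens and necessitation. -/
inductive LIK (X : Set ModAx) : Formula → Prop where
  | a1 (A B : Formula) : LIK X (A.imp (B.imp A))
  | a2 (A B C : Formula) : LIK X ((A.imp (B.imp C)).imp ((A.imp B).imp (A.imp C)))
  | a3 (A B : Formula) : LIK X ((A.and B).imp A)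
  | a4 (A B : Formula) : LIK X ((A.and B).imp B)
  | a5 (A B : Formula) : LIK X (A.imp (B.imp (A.and B)))
  | a6 (A B : Formula) : LIK X (A.imp (A.or B))
  | a7 (A B : Formula) : LIK X (B.imp (A.or B))
  | a8 (A B C : Formula) : LIK X ((A.imp C).imp ((B.imp C).imp ((A.or B).imp C)))
  | exfalso (A : Formula) : LIK X (Formula.bot.imp A)
  | truth : LIK X Formula.top
  | kbox (A B : Formula) :
      LIK X ((Formula.box (A.imp B)).imp ((Formula.box A).imp (Formula.box B)))
  | kdia (A B : Formula) :
      LIK X ((Formula.box (A.imp B)).imp ((Formula.dia A).imp (Formula.dia B)))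
  | nax : LIK X ((Formula.dia Formula.bot).imp Formula.bot)
  | dp (A B : Formula) :
      LIK X ((Formula.dia (A.or B)).imp ((Formula.dia A).or (Formula.dia B)))
  | rv (A B : Formula) :
      LIK X ((Formula.box (A.or B)).imp ((Formula.dia A).or (Formula.box B)))
  | dax : ModAx.D ∈ X → LIK X (Formula.dia Formula.top)
  | tax (A : Formula) : ModAx.T ∈ X →
      LIK X (((Formula.box A).imp A).and (A.imp (Formula.dia A)))
  | fourax (A : Formula) : ModAx.Four ∈ X →
      LIK X (((Formula.box A).imp (Formula.box (Formula.box A))).and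
        ((Formula.dia (Formula.dia A)).imp (Formula.dia A)))
  | mp (A B : Formula) : LIK X (A.imp B) → LIK X A → LIK X B
  | nec (A : Formula) : LIK X A → LIK X (Formula.box A)

/-- Aczel slash relation for LIK X. -/
def Sl (X : Set ModAx) : Formula → Prop
  | .atom n => LIK X (.atom n)
  | .top => True
  | .bot => False
  | .and A B => Sl X A ∧ Sl X B
  | .or A B => Sl X A ∨ Sl X B
  | .imp A B => LIK X (A.imp B) ∧ (Sl X A → Sl X B)
  | .box A => LIK X (Formula.box A) ∧ Sl X A
  | .dia A => LIK X (Formula.dia A) ∧ Sl X A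

theorem Sl_prov (X : Set ModAx) : ∀ A : Formula, Sl X A → LIK X A
  | .atom _, h => h
  | .top, _ => .truth
  | .bot, h => h.elim
  | .and A B, h => .mp _ _ (.mp _ _ (.a5 A B) (Sl_prov X A h.1)) (Sl_prov X B h.2)
  | .or A B, h => h.elim (fun hA => .mp _ _ (.a6 A B) (Sl_prov X A hA))
      (fun hB => .mp _ _ (.a7 A B) (Sl_prov X B hB))
  | .imp _ _, h => h.1
  | .box _, h => h.1
  | .dia _, h => h.1

theorem prov_dia (X : Set ModAx) (hx : ModAx.D ∈ X ∨ ModAx.T ∈ X) {A : Formula}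
    (h : LIK X A) : LIK X (Formula.dia A) := by
  rcases hx with hD | hT
  · exact .mp _ _ (.mp _ _ (.kdia Formula.top A)
      (.nec _ (.mp _ _ (.a1 A Formula.top) h))) (.dax hD)
  · exact .mp _ _ (.mp _ _ (.a4 _ _) (.tax A hT)) h

theorem slash_of_prov (X : Set ModAx) (hx : ModAx.D ∈ X ∨ ModAx.T ∈ X) {A : Formula}
    (h : LIK X A) : Sl X A := by
  induction h with
  | a1 A B => exact ⟨.a1 A B, fun hA => ⟨.mp _ _ (.a1 _ _) (Sl_prov X A hA), fun _ => hA⟩⟩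
  | a2 A B C =>
      exact ⟨.a2 A B C, fun h1 => ⟨.mp _ _ (.a2 _ _ _) h1.1, fun h2 =>
        ⟨.mp _ _ (.mp _ _ (.a2 _ _ _) h1.1) h2.1, fun hA => (h1.2 hA).2 (h2.2 hA)⟩⟩⟩
  | a3 A B => exact ⟨.a3 A B, fun h => h.1⟩
  | a4 A B => exact ⟨.a4 A B, fun h => h.2⟩
  | a5 A B => exact ⟨.a5 A B, fun hA => ⟨.mp _ _ (.a5 _ _) (Sl_prov X A hA), fun hB => ⟨hA, hB⟩⟩⟩
  | a6 A B => exact ⟨.a6 A B, fun hA => Or.inl hA⟩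
  | a7 A B => exact ⟨.a7 A B, fun hB => Or.inr hB⟩
  | a8 A B C =>
      exact ⟨.a8 A B C, fun h1 => ⟨.mp _ _ (.a8 _ _ _) h1.1, fun h2 =>
        ⟨.mp _ _ (.mp _ _ (.a8 _ _ _) h1.1) h2.1, fun hab => hab.elim h1.2 h2.2⟩⟩⟩
  | exfalso A => exact ⟨.exfalso A, fun h => h.elim⟩
  | truth => exact trivial
  | kbox A B =>
      exact ⟨.kbox A B, fun h1 => ⟨.mp _ _ (.kbox _ _) h1.1, fun h2 =>
        ⟨.mp _ _ (.mp _ _ (.kbox _ _) h1.1) h2.1, h1.2.2 h2.2⟩⟩⟩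
  | kdia A B =>
      exact ⟨.kdia A B, fun h1 => ⟨.mp _ _ (.kdia _ _) h1.1, fun h2 =>
        ⟨.mp _ _ (.mp _ _ (.kdia _ _) h1.1) h2.1, h1.2.2 h2.2⟩⟩⟩
  | nax => exact ⟨.nax, fun h => h.2⟩
  | dp A B =>
      exact ⟨.dp A B, fun h => h.2.elim
        (fun hA => Or.inl ⟨prov_dia X hx (Sl_prov X A hA), hA⟩)
        (fun hB => Or.inr ⟨prov_dia X hx (Sl_prov X B hB), hB⟩)⟩
  | rv A B =>
      exact ⟨.rv A B, fun h => h.2.elim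
        (fun hA => Or.inl ⟨prov_dia X hx (Sl_prov X A hA), hA⟩)
        (fun hB => Or.inr ⟨.nec _ (Sl_prov X B hB), hB⟩)⟩
  | dax hD => exact ⟨.dax hD, trivial⟩
  | tax A hT =>
      exact ⟨⟨.mp _ _ (.a3 _ _) (.tax A hT), fun h => h.2⟩,
        ⟨.mp _ _ (.a4 _ _) (.tax A hT),
          fun hA => ⟨prov_dia X hx (Sl_prov X A hA), hA⟩⟩⟩
  | fourax A h4 =>
      exact ⟨⟨.mp _ _ (.a3 _ _) (.fourax A h4), fun h =>
          ⟨.mp _ _ (.mp _ _ (.a3 _ _) (.fourax A h4)) h.1, h⟩⟩,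
        ⟨.mp _ _ (.a4 _ _) (.fourax A h4), fun h => h.2⟩⟩
  | mp A B h1 h2 ih1 ih2 => exact ih1.2 ih2
  | nec A h ih => exact ⟨.nec A h, ih⟩

/-- Interpretation refuting ◇⊤ when D, T ∉ X: box ↦ True, dia ↦ False. -/
def ev1 : Formula → Prop
  | .atom _ => True
  | .top => True
  | .bot => False
  | .and A B => ev1 A ∧ ev1 B
  | .or A B => ev1 A ∨ ev1 B
  | .imp A B => ev1 A → ev1 B
  | .box _ => True
  | .dia _ => False

theorem ev1_sound (X : Set ModAx) (hD : ModAx.D ∉ X) (hT : ModAx.T ∉ X)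
    {A : Formula} (h : LIK X A) : ev1 A := by
  induction h with
  | dax hd => exact absurd hd hD
  | tax _ ht => exact absurd ht hT
  | _ => simp_all [ev1] <;> tauto

/-- Interpretation refuting □⊥ : identity on modalities. -/
def ev2 : Formula → Prop
  | .atom _ => True
  | .top => True
  | .bot => False
  | .and A B => ev2 A ∧ ev2 B
  | .or A B => ev2 A ∨ ev2 B
  | .imp A B => ev2 A → ev2 B
  | .box A => ev2 A
  | .dia A => ev2 A

theorem ev2_sound (X : Set ModAx) {A : Formula} (h : LIK X A) : ev2 A := by
  induction h with
  | _ => simp_all [ev2] <;> tauto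

/-- LIK X has the disjunction property if and only if D ∈ X or T ∈ X. -/
theorem likx_disjunction_property_iff (X : Set ModAx) :
    (∀ A B : Formula, LIK X (A.or B) → LIK X A ∨ LIK X B) ↔
      (ModAx.D ∈ X ∨ ModAx.T ∈ X) := by
  constructor
  · intro hdp
    by_contra hc
    push_neg at hc
    obtain ⟨hD, hT⟩ := hc
    have h1 : LIK X ((Formula.dia Formula.top).or (Formula.box Formula.bot)) :=
      .mp _ _ (.rv Formula.top Formula.bot)
        (.nec _ (.mp _ _ (.a6 Formula.top Formula.bot) .truth))
    rcases hdp _ _ h1 with h | h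
    · simpa [ev1] using ev1_sound X hD hT h
    · simpa [ev2] using ev2_sound X h
  · intro hx A B h
    have hs := slash_of_prov X hx h
    exact hs.imp (Sl_prov X A) (Sl_prov X B)
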